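/- If an invertible symmetric operator A and an invertible symmetric operator B on a finite-dimensional real inner product space are connected by a continuous path of invertible symmetric operators, then μ₋(A) = μ₋(B). -/

import Mathlib

open Module Set
open scoped RealInnerProductSpace

/-- The Morse index: the number of negative eigenvalues, counted with multiplicity. -/
noncomputable def morseIndex {H : Type*} [NormedAddCommGroup H] [InnerProductSpace ℝ H]
    (T : H →L[ℝ] H) : ℕ :=
  Module.finrank ℝ ↥(⨆ μ : {μ : ℝ // μ < 0}, Module.End.eigenspace (↑T : H →ₗ[ℝ] H) ↑μ)

/-!
On the negative spectral subspace of a symmetric operator `T` one has `⟪T x, x⟫ ≤ -c ‖x‖²`,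
where `c > 0` is the distance from `0` to the negative eigenvalues. This subspace therefore stays
negative definite for every symmetric `S` with `‖S - T‖ < c`, and it meets the nonnegative
spectral subspace of `S` trivially, so `μ₋(S) ≥ μ₋(T)`. Applied to `-T`, whose negative
eigenvalues are the positive eigenvalues of `T`, this gives the same for `μ₊`. Since
`μ₋ + μ₊ = dim H` for invertible operators, `μ₋` is locally constant on the invertible symmetric
operators, hence constant along a path of them.
-/

open Module.End Filter Topology

section Spectral

variable {H : Type*} [NormedAddCommGroup H] [InnerProductSpace ℝ H]

def spectralSubspace (T : H →ₗ[ℝ] H) (p : ℝ → Prop) : Submodule ℝ H :=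
  ⨆ μ : {μ : ℝ // p μ}, eigenspace T μ

theorem morseIndex_eq_finrank_spectralSubspace (T : H →L[ℝ] H) :
    morseIndex T = finrank ℝ (spectralSubspace (T : H →ₗ[ℝ] H) (· < 0)) :=
  rfl

theorem spectralSubspace_le_spectralSubspace {T : H →ₗ[ℝ] H} {p q : ℝ → Prop}
    (hpq : ∀ μ, HasEigenvalue T μ → p μ → q μ) :
    spectralSubspace T p ≤ spectralSubspace T q := by
  refine iSup_le fun ⟨μ, hμ⟩ => ?_
  by_cases hT : HasEigenvalue T μ
  · exact le_iSup (fun ν : {ν // q ν} => eigenspace T ν) ⟨μ, hpq μ hT hμ⟩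
  · simp [not_not.1 hT]

theorem spectralSubspace_neg (T : H →ₗ[ℝ] H) (p : ℝ → Prop) :
    spectralSubspace (-T) p = spectralSubspace T (fun μ => p (-μ)) := by
  have heig : ∀ μ, eigenspace (-T) μ = eigenspace T (-μ) := fun μ => by
    ext x
    simp only [mem_eigenspace_iff, LinearMap.neg_apply, neg_smul, neg_eq_iff_eq_neg]
  simp only [spectralSubspace, heig]
  exact ((Equiv.neg ℝ).subtypeEquiv fun μ => by simp).iSup_congr fun μ => by simp

end Spectral

namespace LinearMap.IsSymmetric

variable {H : Type*} [NormedAddCommGroup H] [InnerProductSpace ℝ H] [FiniteDimensional ℝ H]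
  {T : H →ₗ[ℝ] H} (hT : T.IsSymmetric) {n : ℕ} (hn : finrank ℝ H = n)
include hT

theorem eigenvectorBasis_mem_spectralSubspace {p : ℝ → Prop} {i : Fin n}
    (hi : p (hT.eigenvalues hn i)) : hT.eigenvectorBasis hn i ∈ spectralSubspace T p :=
  le_iSup (fun μ : {μ // p μ} => eigenspace T μ) ⟨_, hi⟩
    (hT.hasEigenvector_eigenvectorBasis hn i).1

theorem eigenvectorBasis_repr_eq_zero {p : ℝ → Prop} {x : H} (hx : x ∈ spectralSubspace T p)
    {i : Fin n} (hi : ¬ p (hT.eigenvalues hn i)) : (hT.eigenvectorBasis hn).repr x i = 0 := by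
  induction hx using Submodule.iSup_induction' with
  | mem μ x hx =>
    have h := hT.eigenvectorBasis_apply_self_apply hn x i
    rw [mem_eigenspace_iff.1 hx, map_smul, PiLp.smul_apply, smul_eq_mul] at h
    have hne : (μ : ℝ) ≠ hT.eigenvalues hn i := fun h => hi (h ▸ μ.2)
    exact (mul_eq_mul_right_iff.1 h).resolve_left hne
  | zero => simp
  | add x y _ _ hx hy => simp [hx, hy]

theorem inner_apply_self_eq_sum (x : H) :
    ⟪T x, x⟫ = ∑ i, hT.eigenvalues hn i * (hT.eigenvectorBasis hn).repr x i ^ 2 := by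
  rw [← (hT.eigenvectorBasis hn).repr.inner_map_map, PiLp.inner_apply]
  refine Finset.sum_congr rfl fun i _ => ?_
  rw [hT.eigenvectorBasis_apply_self_apply hn x i]
  simp [pow_two, mul_left_comm]

theorem sq_norm_eq_sum (x : H) :
    ‖x‖ ^ 2 = ∑ i, (hT.eigenvectorBasis hn).repr x i ^ 2 := by
  simp [← (hT.eigenvectorBasis hn).sum_sq_inner_right x, OrthonormalBasis.repr_apply_apply]

theorem inner_apply_self_le_of_mem {p : ℝ → Prop} {a : ℝ}
    (ha : ∀ μ, HasEigenvalue T μ → p μ → μ ≤ a) {x : H} (hx : x ∈ spectralSubspace T p) :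
    ⟪T x, x⟫ ≤ a * ‖x‖ ^ 2 := by
  rw [hT.inner_apply_self_eq_sum rfl, hT.sq_norm_eq_sum rfl, Finset.mul_sum]
  refine Finset.sum_le_sum fun i _ => ?_
  by_cases hi : p (hT.eigenvalues rfl i)
  · exact mul_le_mul_of_nonneg_right (ha _ (hT.hasEigenvalue_eigenvalues rfl i) hi) (sq_nonneg _)
  · simp [hT.eigenvectorBasis_repr_eq_zero rfl hx hi]

theorem le_inner_apply_self_of_mem {p : ℝ → Prop} {a : ℝ}
    (ha : ∀ μ, HasEigenvalue T μ → p μ → a ≤ μ) {x : H} (hx : x ∈ spectralSubspace T p) :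
    a * ‖x‖ ^ 2 ≤ ⟪T x, x⟫ := by
  rw [hT.inner_apply_self_eq_sum rfl, hT.sq_norm_eq_sum rfl, Finset.mul_sum]
  refine Finset.sum_le_sum fun i _ => ?_
  by_cases hi : p (hT.eigenvalues rfl i)
  · exact mul_le_mul_of_nonneg_right (ha _ (hT.hasEigenvalue_eigenvalues rfl i) hi) (sq_nonneg _)
  · simp [hT.eigenvectorBasis_repr_eq_zero rfl hx hi]

theorem isCompl_spectralSubspace (p : ℝ → Prop) :
    IsCompl (spectralSubspace T p) (spectralSubspace T (¬ p ·)) := by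
  set b := hT.eigenvectorBasis rfl
  constructor
  · rw [Submodule.disjoint_def]
    intro x hp hnp
    rw [← b.repr.map_eq_zero_iff]
    ext i
    by_cases hi : p (hT.eigenvalues rfl i)
    · simpa using hT.eigenvectorBasis_repr_eq_zero rfl hnp (not_not.2 hi)
    · simpa using hT.eigenvectorBasis_repr_eq_zero rfl hp hi
  · rw [codisjoint_iff, eq_top_iff]
    rintro x -
    rw [← b.sum_repr x]
    refine Submodule.sum_mem _ fun i _ => Submodule.smul_mem _ _ ?_
    by_cases hi : p (hT.eigenvalues rfl i)
    · exact Submodule.mem_sup_left (hT.eigenvectorBasis_mem_spectralSubspace rfl hi)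
    · exact Submodule.mem_sup_right (hT.eigenvectorBasis_mem_spectralSubspace rfl hi)

theorem finrank_le_finrank_spectralSubspace {p : ℝ → Prop} {W : Submodule ℝ H}
    (hW : Disjoint W (spectralSubspace T (¬ p ·))) :
    finrank ℝ W ≤ finrank ℝ (spectralSubspace T p) := by
  have := Submodule.finrank_add_finrank_le_of_disjoint hW
  have := Submodule.finrank_add_eq_of_isCompl (hT.isCompl_spectralSubspace p)
  omega

end LinearMap.IsSymmetric

theorem Module.End.exists_pos_forall_hasEigenvalue_le_neg {V : Type*} [AddCommGroup V]
    [Module ℝ V] [FiniteDimensional ℝ V] (f : End ℝ V) :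
    ∃ c > 0, ∀ μ, f.HasEigenvalue μ → μ < 0 → μ ≤ -c := by
  have hfin : {μ | f.HasEigenvalue μ ∧ μ < 0}.Finite :=
    f.finite_hasEigenvalue.subset fun μ h => h.1
  have hgap : ∀ᶠ c in 𝓝[>] (0 : ℝ), ∀ μ ∈ {μ | f.HasEigenvalue μ ∧ μ < 0}, μ ≤ -c :=
    hfin.eventually_all.2 fun μ hμ => nhdsWithin_le_nhds <|
      (eventually_le_nhds (neg_pos.2 hμ.2)).mono fun c hc => by linarith
  obtain ⟨c, hc, hc0⟩ := (hgap.and self_mem_nhdsWithin).exists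
  exact ⟨c, hc0, fun μ h1 h2 => hc μ ⟨h1, h2⟩⟩

theorem ContinuousLinearMap.inner_apply_self_le_add_norm_sub_mul {H : Type*}
    [NormedAddCommGroup H] [InnerProductSpace ℝ H] (S T : H →L[ℝ] H) (x : H) :
    ⟪S x, x⟫ ≤ ⟪T x, x⟫ + ‖S - T‖ * ‖x‖ ^ 2 := by
  have h : ⟪(S - T) x, x⟫ ≤ ‖S - T‖ * ‖x‖ ^ 2 := calc
    _ ≤ ‖(S - T) x‖ * ‖x‖ := real_inner_le_norm _ _
    _ ≤ ‖S - T‖ * ‖x‖ * ‖x‖ := by gcongr; exact (S - T).le_opNorm x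
    _ = _ := by ring
  rw [sub_apply, inner_sub_left] at h
  linarith

section MorseIndex

variable {H : Type*} [NormedAddCommGroup H] [InnerProductSpace ℝ H] [FiniteDimensional ℝ H]

theorem eventually_morseIndex_le {T : H →L[ℝ] H} (hT : IsSelfAdjoint T) :
    ∀ᶠ S in 𝓝 T, IsSelfAdjoint S → morseIndex T ≤ morseIndex S := by
  obtain ⟨c, hc, hgap⟩ := Module.End.exists_pos_forall_hasEigenvalue_le_neg (T : H →ₗ[ℝ] H)
  filter_upwards [Metric.ball_mem_nhds T hc] with S hST hS
  rw [Metric.mem_ball, dist_eq_norm] at hST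
  refine hS.isSymmetric.finrank_le_finrank_spectralSubspace (Submodule.disjoint_def.2 ?_)
  intro x hxT hxS
  by_contra hx
  have hT_neg : ⟪T x, x⟫ ≤ -c * ‖x‖ ^ 2 := hT.isSymmetric.inner_apply_self_le_of_mem hgap hxT
  have hS_nonneg : 0 * ‖x‖ ^ 2 ≤ ⟪S x, x⟫ :=
    hS.isSymmetric.le_inner_apply_self_of_mem (fun μ _ hμ => not_lt.1 hμ) hxS
  have hclose := S.inner_apply_self_le_add_norm_sub_mul T x
  have := mul_lt_mul_of_pos_right hST (by positivity : 0 < ‖x‖ ^ 2)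
  linarith

theorem morseIndex_add_morseIndex_neg {T : H →L[ℝ] H} (hT : IsSelfAdjoint T)
    (hinj : Function.Injective T) : morseIndex T + morseIndex (-T) = finrank ℝ H := by
  have h0 : ¬ HasEigenvalue (T : H →ₗ[ℝ] H) 0 :=
    ((LinearMap.not_hasEigenvalue_zero_tfae _).out 0 4).2 (LinearMap.ker_eq_bot.2 hinj)
  have hpos : spectralSubspace (T : H →ₗ[ℝ] H) (fun μ => -μ < 0) =
      spectralSubspace (T : H →ₗ[ℝ] H) (¬ · < 0) :=
    le_antisymm (spectralSubspace_le_spectralSubspace fun μ _ h => by linarith)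
      (spectralSubspace_le_spectralSubspace fun μ hμ h =>
        neg_neg_of_pos ((not_lt.1 h).lt_of_ne' fun h' => h0 (h' ▸ hμ)))
  rw [morseIndex_eq_finrank_spectralSubspace, morseIndex_eq_finrank_spectralSubspace,
    ContinuousLinearMap.toLinearMap_neg, spectralSubspace_neg, hpos]
  exact Submodule.finrank_add_eq_of_isCompl (hT.isSymmetric.isCompl_spectralSubspace _)

theorem eventually_morseIndex_eq {T : H →L[ℝ] H} (hT : IsSelfAdjoint T)
    (hinj : Function.Injective T) :
    ∀ᶠ S : H →L[ℝ] H in 𝓝 T, IsSelfAdjoint S → Function.Injective S →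
      morseIndex S = morseIndex T := by
  have hneg : ∀ᶠ S in 𝓝 T, IsSelfAdjoint (-S) → morseIndex (-T) ≤ morseIndex (-S) :=
    continuous_neg.continuousAt.eventually (eventually_morseIndex_le hT.neg)
  filter_upwards [eventually_morseIndex_le hT, hneg] with S hle hle' hS hSinj
  have hT_sum := morseIndex_add_morseIndex_neg hT hinj
  have hS_sum := morseIndex_add_morseIndex_neg hS hSinj
  have := hle hS
  have := hle' hS.neg
  omega

end MorseIndex

theorem morse_index_homotopy_invariance_general
    {H : Type*} [NormedAddCommGroup H] [InnerProductSpace ℝ H] [FiniteDimensional ℝ H]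
    (A B : H →L[ℝ] H)
    (γ : ℝ → H →L[ℝ] H) (hγ : ContinuousOn γ (Icc 0 1))
    (h0 : γ 0 = A) (h1 : γ 1 = B)
    (hpath : ∀ t ∈ Icc (0:ℝ) 1, IsSelfAdjoint (γ t) ∧ Function.Bijective ⇑(γ t)) :
    morseIndex A = morseIndex B := by
  have hloc : ∀ t ∈ Icc (0:ℝ) 1, ∀ᶠ s in 𝓝[Icc 0 1] t, morseIndex (γ s) = morseIndex (γ t) :=
    fun t ht => by
      filter_upwards [hγ t ht (eventually_morseIndex_eq (hpath t ht).1 (hpath t ht).2.1),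
        self_mem_nhdsWithin] with s hs hsI
      exact hs (hpath s hsI).1 (hpath s hsI).2.1
  have hconst : ContinuousOn (fun t => morseIndex (γ t)) (Icc 0 1) :=
    fun t ht => tendsto_nhds_of_eventually_eq (hloc t ht)
  simpa [h0, h1] using
    isPreconnected_Icc.constant hconst (left_mem_Icc.2 zero_le_one) (right_mem_Icc.2 zero_le_one)

/-- If invertible symmetric operators `A` and `B` on a finite-dimensional real
inner product space are connected by a continuous path of invertible symmetric operators, then
`μ₋(A) = μ₋(B)`. -/
theorem morse_index_homotopy_invariance
    {H : Type*} [NormedAddCommGroup H] [InnerProductSpace ℝ H] [FiniteDimensional ℝ H]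
    (A B : H →L[ℝ] H) (hA : IsSelfAdjoint A) (hB : IsSelfAdjoint B)
    (hAinv : Function.Bijective ⇑A) (hBinv : Function.Bijective ⇑B)
    (γ : ℝ → H →L[ℝ] H) (hγ : ContinuousOn γ (Icc 0 1))
    (h0 : γ 0 = A) (h1 : γ 1 = B)
    (hpath : ∀ t ∈ Icc (0:ℝ) 1, IsSelfAdjoint (γ t) ∧ Function.Bijective ⇑(γ t)) :
    morseIndex A = morseIndex B :=
  morse_index_homotopy_invariance_general A B γ hγ h0 h1 hpath
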